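/- Under the Gaussian linear model, the estimator β̂₂ = D⁻¹(X − X̃)ᵀY has the multivariate Gaussian distribution N_d(β, 2τ²D⁻¹); that is, the law of β̂₂ is the multivariate Gaussian measure on ℝ^d with mean β and covariance matrix 2τ²D⁻¹ (a diagonal covariance matrix, so the components of β̂₂ are uncorrelated). -/

import Mathlib

/-!
With `M = X - X̃` and `A = D⁻¹ Mᵀ`, the constraints `XᵀŨ = 0`, `ŨᵀŨ = I` and
`C² = 2D - DΣ⁻¹D` on the knockoff give `MᵀX = D` and `MᵀM = 2D`, hence `AX = I` and
`AAᵀ = 2D⁻¹`. So `β̂₂ = A(Xβ + ε) = β + Aε`, and each projection `l ⬝ β̂₂ = l ⬝ β + (Aᵀl) ⬝ ε`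
is a weighted sum of independent `N(0, τ²)` variables, i.e. (comparing characteristic
functions) `N(l ⬝ β, τ² ‖Aᵀl‖²) = N(l ⬝ β, 2τ² lᵀD⁻¹l)`.
-/

open Matrix MeasureTheory ProbabilityTheory

/-- A measure on `ℝ^d` is the multivariate Gaussian with mean `m` and covariance
matrix `C` iff every one-dimensional linear projection is a real Gaussian with the
corresponding mean and variance (Cramér–Wold characterization). -/
def IsMultivariateGaussian {d : ℕ} (ν : Measure (Fin d → ℝ))
    (m : Fin d → ℝ) (C : Matrix (Fin d) (Fin d) ℝ) : Prop :=
  ∀ l : Fin d → ℝ,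
    ν.map (fun x => l ⬝ᵥ x) = gaussianReal (l ⬝ᵥ m) (l ⬝ᵥ (C *ᵥ l)).toNNReal

open scoped NNReal

section Gaussian

variable {ι : Type*} [Fintype ι]

lemma map_sum_pi_gaussianReal (m : ι → ℝ) (v : ι → ℝ≥0) :
    (Measure.pi fun i => gaussianReal (m i) (v i)).map (fun x => ∑ i, x i)
      = gaussianReal (∑ i, m i) (∑ i, v i) := by
  refine Measure.ext_of_charFun ?_
  ext t
  rw [charFun_map_sum_pi_eq_prod]
  simp only [Finset.prod_apply, charFun_gaussianReal, ← Complex.exp_sum]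
  push_cast
  simp only [Finset.sum_sub_distrib, ← Finset.sum_mul, ← Finset.mul_sum, ← Finset.sum_div]

lemma map_dotProduct_pi_gaussianReal (w : ι → ℝ) (v : ℝ≥0) :
    (Measure.pi fun _ : ι => gaussianReal 0 v).map (w ⬝ᵥ ·)
      = gaussianReal 0 ((v : ℝ) * (w ⬝ᵥ w)).toNNReal := by
  have hcomp : (w ⬝ᵥ ·) = (fun x : ι → ℝ => ∑ i, x i) ∘ (fun x i => w i * x i) := rfl
  rw [hcomp, ← Measure.map_map (by fun_prop) (by fun_prop),
    Measure.pi_map_pi (fun i => (measurable_const_mul (w i)).aemeasurable)]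
  simp only [gaussianReal_map_const_mul, mul_zero]
  rw [map_sum_pi_gaussianReal, Finset.sum_const_zero]
  congr 1
  ext
  have hvar : (0 : ℝ) ≤ v * (w ⬝ᵥ w) :=
    mul_nonneg v.2 (Finset.sum_nonneg fun i _ => mul_self_nonneg (w i))
  rw [Real.coe_toNNReal _ hvar]
  simp [dotProduct, Finset.mul_sum, sq, mul_comm]

lemma isMultivariateGaussian_map_affine_pi_gaussianReal {d : ℕ} (A : Matrix (Fin d) ι ℝ)
    (b : Fin d → ℝ) (v : ℝ≥0) :
    IsMultivariateGaussian ((Measure.pi fun _ : ι => gaussianReal 0 v).map fun y => b + A *ᵥ y)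
      b ((v : ℝ) • (A * Aᵀ)) := by
  intro l
  have hproj : (l ⬝ᵥ ·) ∘ (fun y => b + A *ᵥ y) = (l ⬝ᵥ b + ·) ∘ ((Aᵀ *ᵥ l) ⬝ᵥ ·) := by
    funext y
    simp [dotProduct_add, dotProduct_mulVec, ← mulVec_transpose]
  have hvar : l ⬝ᵥ (((v : ℝ) • (A * Aᵀ)) *ᵥ l) = v * ((Aᵀ *ᵥ l) ⬝ᵥ (Aᵀ *ᵥ l)) := by
    rw [smul_mulVec, dotProduct_smul, ← mulVec_mulVec, dotProduct_mulVec, ← mulVec_transpose,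
      smul_eq_mul]
  rw [Measure.map_map (by fun_prop) (by fun_prop), hproj,
    ← Measure.map_map (by fun_prop) (by fun_prop), map_dotProduct_pi_gaussianReal,
    gaussianReal_map_const_add, zero_add, hvar]

lemma isMultivariateGaussian_map_of_mul_eq_one {Ω : Type*} [MeasurableSpace Ω] (μ : Measure Ω)
    {d : ℕ} (X : Matrix ι (Fin d) ℝ) (A : Matrix (Fin d) ι ℝ) (hAX : A * X = 1)
    (β : Fin d → ℝ) (v : ℝ≥0) (ε : Ω → ι → ℝ) (hε : Measurable ε)
    (hεlaw : μ.map ε = Measure.pi fun _ => gaussianReal 0 v) :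
    IsMultivariateGaussian (μ.map fun ω => A *ᵥ (X *ᵥ β + ε ω)) β ((v : ℝ) • (A * Aᵀ)) := by
  have hunbiased : (fun ω => A *ᵥ (X *ᵥ β + ε ω)) = (fun y => β + A *ᵥ y) ∘ ε := by
    funext ω
    rw [Function.comp_apply, mulVec_add, mulVec_mulVec, hAX, one_mulVec]
  rw [hunbiased, ← Measure.map_map (by fun_prop) hε, hεlaw]
  exact isMultivariateGaussian_map_affine_pi_gaussianReal A β v

end Gaussian

section Knockoff

variable {n d : Type*} [Fintype n] [Fintype d] [DecidableEq d]

noncomputable def knockoff (X U : Matrix n d ℝ) (D C : Matrix d d ℝ) : Matrix n d ℝ :=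
  X * (Xᵀ * X)⁻¹ * (Xᵀ * X - D) + U * C

variable {X U : Matrix n d ℝ} {D C : Matrix d d ℝ}

lemma sub_knockoff (hX : IsUnit (Xᵀ * X).det) :
    X - knockoff X U D C = X * ((Xᵀ * X)⁻¹ * D) - U * C := by
  rw [knockoff, Matrix.mul_sub, Matrix.mul_assoc X _ (Xᵀ * X), nonsing_inv_mul _ hX,
    Matrix.mul_one, Matrix.mul_assoc]
  abel

lemma transpose_sub_knockoff (hX : IsUnit (Xᵀ * X).det) :
    (X - knockoff X U D C)ᵀ = Dᵀ * ((Xᵀ * X)⁻¹ * Xᵀ) - Cᵀ * Uᵀ := by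
  rw [sub_knockoff hX, transpose_sub, transpose_mul, transpose_mul, transpose_mul,
    transpose_nonsing_inv, transpose_mul, transpose_transpose, Matrix.mul_assoc]

lemma transpose_sub_knockoff_mul (hX : IsUnit (Xᵀ * X).det) (hXU : Xᵀ * U = 0) :
    (X - knockoff X U D C)ᵀ * X = Dᵀ := by
  have hUX : Uᵀ * X = 0 := by rw [← transpose_transpose X, ← transpose_mul, hXU, transpose_zero]
  rw [transpose_sub_knockoff hX, Matrix.sub_mul, Matrix.mul_assoc, Matrix.mul_assoc,
    nonsing_inv_mul _ hX, Matrix.mul_one, Matrix.mul_assoc, hUX, Matrix.mul_zero, sub_zero]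

lemma transpose_sub_knockoff_mul_sub_knockoff (hX : IsUnit (Xᵀ * X).det) (hXU : Xᵀ * U = 0)
    (hUU : Uᵀ * U = 1) :
    (X - knockoff X U D C)ᵀ * (X - knockoff X U D C) = Dᵀ * (Xᵀ * X)⁻¹ * D + Cᵀ * C := by
  have hUX : Uᵀ * X = 0 := by rw [← transpose_transpose X, ← transpose_mul, hXU, transpose_zero]
  rw [transpose_sub_knockoff hX, sub_knockoff hX]
  simp only [Matrix.sub_mul, Matrix.mul_sub, Matrix.mul_assoc]
  simp only [← Matrix.mul_assoc Xᵀ, ← Matrix.mul_assoc Uᵀ, ← Matrix.mul_assoc (Xᵀ * X),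
    mul_nonsing_inv _ hX, hXU, hUX, hUU, Matrix.one_mul, Matrix.zero_mul, Matrix.mul_zero]
  abel

end Knockoff

theorem betahat_two_is_gaussian_general
    {n d : ℕ}
    (X : Matrix (Fin n) (Fin d) ℝ)
    (hSg : (Xᵀ * X).PosDef)
    (s : Fin d → ℝ) (hs : ∀ j, 0 < s j)
    (U : Matrix (Fin n) (Fin d) ℝ) (hUU : Uᵀ * U = 1) (hXU : Xᵀ * U = 0)
    (C : Matrix (Fin d) (Fin d) ℝ) (hC : C.PosSemidef)
    (hCsq : C * C = (2 : ℝ) • Matrix.diagonal s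
        - Matrix.diagonal s * (Xᵀ * X)⁻¹ * Matrix.diagonal s)
    {Ω : Type*} [MeasurableSpace Ω] (μ : Measure Ω)
    (β : Fin d → ℝ) (τ : ℝ)
    (ε : Ω → Fin n → ℝ) (hε : Measurable ε)
    (hεlaw : μ.map ε = Measure.pi fun _ : Fin n => gaussianReal 0 ⟨τ ^ 2, sq_nonneg τ⟩) :
    IsMultivariateGaussian
      (μ.map fun ω =>
        (Matrix.diagonal s)⁻¹ *ᵥ
          ((X - (X * (Xᵀ * X)⁻¹ * (Xᵀ * X - Matrix.diagonal s) + U * C))ᵀ *ᵥ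
            (X *ᵥ β + ε ω)))
      β
      ((2 * τ ^ 2) • (Matrix.diagonal s)⁻¹) := by
  have hXX : IsUnit (Xᵀ * X).det := (isUnit_iff_isUnit_det _).1 hSg.isUnit
  have hD : IsUnit (diagonal s).det := by
    simp [det_diagonal, Finset.prod_ne_zero_iff, (hs _).ne']
  have hDt : (diagonal s)ᵀ = diagonal s := diagonal_transpose s
  have hCt : Cᵀ = C := (isHermitian_iff_isSymm.1 hC.isHermitian).eq
  change IsMultivariateGaussian (μ.map fun ω =>
    (diagonal s)⁻¹ *ᵥ ((X - knockoff X U (diagonal s) C)ᵀ *ᵥ (X *ᵥ β + ε ω))) _ _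
  set M := X - knockoff X U (diagonal s) C
  have hMX : Mᵀ * X = diagonal s := by rw [transpose_sub_knockoff_mul hXX hXU, hDt]
  have hMM : Mᵀ * M = (2 : ℝ) • diagonal s := by
    rw [transpose_sub_knockoff_mul_sub_knockoff hXX hXU hUU, hDt, hCt, hCsq]
    abel
  have hAX : (diagonal s)⁻¹ * Mᵀ * X = 1 := by rw [Matrix.mul_assoc, hMX, nonsing_inv_mul _ hD]
  have hAAt : (diagonal s)⁻¹ * Mᵀ * ((diagonal s)⁻¹ * Mᵀ)ᵀ = (2 : ℝ) • (diagonal s)⁻¹ := by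
    rw [transpose_mul, transpose_transpose, transpose_nonsing_inv, hDt, Matrix.mul_assoc,
      ← Matrix.mul_assoc Mᵀ, hMM, Matrix.smul_mul, Matrix.mul_smul, ← Matrix.mul_assoc,
      nonsing_inv_mul _ hD, Matrix.one_mul]
  simp_rw [mulVec_mulVec]
  convert isMultivariateGaussian_map_of_mul_eq_one μ X _ hAX β _ ε hε hεlaw using 1
  rw [hAAt, smul_smul, mul_comm]
  rfl

theorem betahat_two_is_gaussian
    {n d : ℕ} (hd : 1 ≤ d) (hnd : 2 * d ≤ n)
    (X : Matrix (Fin n) (Fin d) ℝ) (hrank : X.rank = d)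
    (hSg : (Xᵀ * X).PosDef)
    (s : Fin d → ℝ) (hs : ∀ j, 0 < s j)
    (hPD : ((2 : ℝ) • (Xᵀ * X) - Matrix.diagonal s).PosDef)
    (U : Matrix (Fin n) (Fin d) ℝ) (hUU : Uᵀ * U = 1) (hXU : Xᵀ * U = 0)
    (C : Matrix (Fin d) (Fin d) ℝ) (hC : C.PosSemidef)
    (hCsq : C * C = (2 : ℝ) • Matrix.diagonal s
        - Matrix.diagonal s * (Xᵀ * X)⁻¹ * Matrix.diagonal s)
    {Ω : Type*} [MeasurableSpace Ω] (μ : Measure Ω) [IsProbabilityMeasure μ]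
    (β : Fin d → ℝ) (τ : ℝ) (hτ : 0 < τ)
    (ε : Ω → Fin n → ℝ) (hε : Measurable ε)
    (hεlaw : μ.map ε = Measure.pi fun _ : Fin n => gaussianReal 0 ⟨τ ^ 2, sq_nonneg τ⟩) :
    IsMultivariateGaussian
      (μ.map fun ω =>
        (Matrix.diagonal s)⁻¹ *ᵥ
          ((X - (X * (Xᵀ * X)⁻¹ * (Xᵀ * X - Matrix.diagonal s) + U * C))ᵀ *ᵥ
            (X *ᵥ β + ε ω)))
      β
      ((2 * τ ^ 2) • (Matrix.diagonal s)⁻¹) :=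
  betahat_two_is_gaussian_general X hSg s hs U hUU hXU C hC hCsq μ β τ ε hε hεlaw
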